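/- arXiv:2009.03481 — 2 statements merged into one kernel-verified Lean document; each statement's English description precedes it below -/
import Mathlib

section
/- Let p(x) = ∑_{l=k}^{n+k} G_l^k(x) x^{n+k−l}. Then for every j with 0 ≤ j ≤ n+1, the j-th derivative of p is p^{(j)}(x) = ((n+k+1)!/(n+k+1−j)!) ∑_{l=k+j}^{n+k} G_{l−j}^k(x) x^{n+k−l}. -/
open Polynomial Finset

/-- Formal exponential series `e^t` with coefficients in `ℚ[X]`. -/
noncomputable def expPS : PowerSeries (Polynomial ℚ) :=
  PowerSeries.mk fun n => Polynomial.C ((n.factorial : ℚ)⁻¹)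

/-- Formal series `e^{xt}` with coefficients in `ℚ[X]`. -/
noncomputable def expXPS : PowerSeries (Polynomial ℚ) :=
  PowerSeries.mk fun n => Polynomial.C ((n.factorial : ℚ)⁻¹) * Polynomial.X ^ n

/-- `G k n` is the Genocchi polynomial `G_n^{(k)}` of order `k`:
`∑ G_n^k(x) t^n/n! = (2t/(e^t+1))^k e^{xt}`, stated without division. -/
def IsGenocchi (G : ℕ → ℕ → Polynomial ℚ) : Prop :=
  ∀ k : ℕ,
    (PowerSeries.mk fun n => Polynomial.C ((n.factorial : ℚ)⁻¹) * G k n) * (expPS + 1) ^ k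
      = (2 * PowerSeries.X) ^ k * expXPS

/-- `E k n` is the Euler polynomial `E_n^{(k)}` of order `k`:
`∑ E_n^k(x) t^n/n! = (2/(e^t+1))^k e^{xt}`, stated without division. -/
def IsEuler (E : ℕ → ℕ → Polynomial ℚ) : Prop :=
  ∀ k : ℕ,
    (PowerSeries.mk fun n => Polynomial.C ((n.factorial : ℚ)⁻¹) * E k n) * (expPS + 1) ^ k
      = 2 ^ k * expXPS

/-- `B k n` is the Bernoulli polynomial `B_n^{(k)}` of order `k`:
`∑ B_n^k(x) t^n/n! = (t/(e^t-1))^k e^{xt}`, stated without division. -/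
def IsBernoulli (B : ℕ → ℕ → Polynomial ℚ) : Prop :=
  ∀ k : ℕ,
    (PowerSeries.mk fun n => Polynomial.C ((n.factorial : ℚ)⁻¹) * B k n) * (expPS - 1) ^ k
      = PowerSeries.X ^ k * expXPS

/-!
Fixing the order `k`, differentiating the generating function in `x` multiplies it by `t`, so
`(G_n^k)_n` is an Appell sequence; and `G_l^k = 0` for `l < k` because the generating function is
divisible by `t^k`. For any Appell sequence `A`, the sums `T_m = ∑_{i+j=m} A_i x^j` satisfy
`T_{m+1}' = (m+2) T_m`. Since the terms of index below `k` vanish, `p = T_{n+k}` and the sum on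
the right is `T_{n+k-j}`.
-/

namespace Polynomial

variable {R : Type*}

def IsAppell [Semiring R] (A : ℕ → R[X]) : Prop :=
  derivative (A 0) = 0 ∧ ∀ m, derivative (A (m + 1)) = (m + 1 : R[X]) * A m

lemma isAppell_X_pow [CommSemiring R] : IsAppell fun n => (X : R[X]) ^ n := by
  refine ⟨by simp, fun m => ?_⟩
  rw [derivative_X_pow, C_eq_natCast]
  push_cast
  rfl

noncomputable def appellSum [Semiring R] (A : ℕ → R[X]) (m : ℕ) : R[X] :=
  ∑ p ∈ antidiagonal m, A p.1 * X ^ p.2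

variable [CommSemiring R] {A : ℕ → R[X]}

/-- On the term `A_i x^j` with `i + j = m`, the two halves of the product rule contribute
`(i + 1)` and `(j + 1)`, which add up to `m + 2`. -/
lemma IsAppell.derivative_appellSum_succ (hA : IsAppell A) (m : ℕ) :
    derivative (appellSum A (m + 1)) = ((m + 2 : ℕ) : R[X]) * appellSum A m := by
  simp only [appellSum, derivative_sum, derivative_mul, sum_add_distrib]
  rw [Finset.Nat.sum_antidiagonal_succ, Finset.Nat.sum_antidiagonal_succ', hA.1]
  simp only [hA.2, derivative_X_pow, C_eq_natCast, zero_mul, zero_add, pow_zero, derivative_one,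
    mul_zero, add_tsub_cancel_right]
  rw [mul_sum, ← sum_add_distrib]
  refine sum_congr rfl fun p hp => ?_
  rw [← mem_antidiagonal.mp hp]
  push_cast
  ring

lemma IsAppell.iterate_derivative_appellSum (hA : IsAppell A) (m j : ℕ) :
    derivative^[j] (appellSum A (m + j))
      = ((m + j + 1).descFactorial j : R[X]) * appellSum A m := by
  induction j with
  | zero => simp
  | succ j ih =>
    rw [Function.iterate_succ_apply, ← add_assoc, hA.derivative_appellSum_succ,
      ← C_eq_natCast, iterate_derivative_C_mul, ih, C_eq_natCast, ← mul_assoc, ← Nat.cast_mul,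
      Nat.succ_descFactorial_succ]

lemma sum_Icc_eq_appellSum {k : ℕ} (hA : ∀ i < k, A i = 0) (N j : ℕ) :
    ∑ l ∈ Icc (k + j) (N + j), A (l - j) * X ^ (N + j - l) = appellSum A N := by
  rw [← map_add_right_Icc, sum_map, appellSum, Finset.Nat.sum_antidiagonal_eq_sum_range_succ
    (fun i l => A i * X ^ l)]
  simp only [addRightEmbedding_apply, Nat.add_sub_cancel, Nat.add_sub_add_right]
  refine sum_subset (fun i hi => by simp at hi ⊢; omega) fun i hi hik => ?_
  rw [hA i (by simp at hi hik; omega), zero_mul]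

end Polynomial

section CoeffwiseDerivative

variable {R : Type*} [CommSemiring R]

/-- The derivative in `x` of a series in `t` with coefficients in `R[x]`. -/
noncomputable def coeffwiseDerivative (f : PowerSeries R[X]) : PowerSeries R[X] :=
  PowerSeries.mk fun m => derivative (PowerSeries.coeff m f)

@[simp]
lemma coeff_coeffwiseDerivative (f : PowerSeries R[X]) (m : ℕ) :
    PowerSeries.coeff m (coeffwiseDerivative f) = derivative (PowerSeries.coeff m f) :=
  PowerSeries.coeff_mk _ _

lemma coeffwiseDerivative_mul (f g : PowerSeries R[X]) :
    coeffwiseDerivative (f * g) = coeffwiseDerivative f * g + f * coeffwiseDerivative g := by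
  ext m : 1
  simp only [coeff_coeffwiseDerivative, map_add, PowerSeries.coeff_mul, derivative_sum,
    derivative_mul, sum_add_distrib]

@[simp]
lemma coeffwiseDerivative_map_C (s : PowerSeries R) :
    coeffwiseDerivative (PowerSeries.map C s) = 0 := by
  ext m : 1
  simp

end CoeffwiseDerivative

noncomputable def egf (A : ℕ → ℚ[X]) : PowerSeries ℚ[X] :=
  PowerSeries.mk fun n => C ((n.factorial : ℚ)⁻¹) * A n

lemma coeffwiseDerivative_egf_eq_X_mul_iff {A : ℕ → ℚ[X]} :
    coeffwiseDerivative (egf A) = PowerSeries.X * egf A ↔ IsAppell A := by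
  have hfact : ∀ m : ℕ,
      C ((m.factorial : ℚ)⁻¹) = C (((m + 1).factorial : ℚ)⁻¹) * (m + 1 : ℚ[X]) := by
    intro m
    rw [← C_eq_natCast, ← C_1, ← C_add, ← C_mul, Nat.factorial_succ]
    push_cast
    field_simp
  rw [PowerSeries.ext_iff, ← Nat.and_forall_add_one, IsAppell]
  refine and_congr (by simp [egf]) (forall_congr' fun m => ?_)
  simp only [coeff_coeffwiseDerivative, PowerSeries.coeff_succ_X_mul, egf, PowerSeries.coeff_mk,
    derivative_C_mul, hfact m, mul_assoc]
  exact mul_right_inj' (by simp [Nat.factorial_ne_zero])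

lemma coeffwiseDerivative_expXPS : coeffwiseDerivative expXPS = PowerSeries.X * expXPS :=
  coeffwiseDerivative_egf_eq_X_mul_iff.mpr isAppell_X_pow

lemma isUnit_exp_add_one_pow (k : ℕ) : IsUnit ((PowerSeries.exp ℚ + 1) ^ k) := by
  refine IsUnit.pow k (PowerSeries.isUnit_iff_constantCoeff.mpr ?_)
  norm_num [PowerSeries.constantCoeff_exp]

section Genocchi

variable {G : ℕ → ℕ → ℚ[X]}

lemma IsGenocchi.egf_mul_map_C (hG : IsGenocchi G) (k : ℕ) :
    egf (G k) * PowerSeries.map C ((PowerSeries.exp ℚ + 1) ^ k)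
      = PowerSeries.map C ((2 * PowerSeries.X) ^ k) * expXPS := by
  have hexp : expPS = PowerSeries.map C (PowerSeries.exp ℚ) := by
    ext n : 1
    simp [expPS, PowerSeries.coeff_exp]
  rw [map_pow, map_pow, map_add, map_one, map_mul, PowerSeries.map_X, map_ofNat, ← hexp]
  exact hG k

lemma IsGenocchi.isAppell (hG : IsGenocchi G) (k : ℕ) : IsAppell (G k) := by
  have hu := (isUnit_exp_add_one_pow k).map (PowerSeries.map (C : ℚ →+* ℚ[X]))
  rw [← coeffwiseDerivative_egf_eq_X_mul_iff]
  refine hu.mul_left_injective ?_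
  dsimp only
  -- `d/dx` kills the `x`-free factors and turns `e^{xt}` into `t e^{xt}`.
  have h := congrArg coeffwiseDerivative (hG.egf_mul_map_C k)
  simp only [coeffwiseDerivative_mul, coeffwiseDerivative_map_C, coeffwiseDerivative_expXPS,
    mul_zero, zero_mul, add_zero, zero_add] at h
  rw [h, mul_assoc, hG.egf_mul_map_C k, mul_left_comm]

lemma IsGenocchi.eq_zero_of_lt (hG : IsGenocchi G) {k m : ℕ} (hm : m < k) : G k m = 0 := by
  have hu := (isUnit_exp_add_one_pow k).map (PowerSeries.map (C : ℚ →+* ℚ[X]))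
  have hdvd : PowerSeries.X ^ k ∣ egf (G k) := by
    rw [← hu.dvd_mul_right, hG.egf_mul_map_C k, map_pow, map_mul, PowerSeries.map_X, mul_pow,
      mul_assoc, mul_left_comm]
    exact dvd_mul_right _ _
  have := PowerSeries.X_pow_dvd_iff.mp hdvd m hm
  simpa [egf, Nat.factorial_ne_zero] using this

end Genocchi

theorem genocchi_poly_iterated_deriv (G : ℕ → ℕ → Polynomial ℚ) (hG : IsGenocchi G)
    (n k : ℕ) (hk : 1 ≤ k)
    (p : Polynomial ℚ)
    (hp : p = ∑ l ∈ Finset.Icc k (n + k), G k l * Polynomial.X ^ (n + k - l))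
    (j : ℕ) (hj : j ≤ n + 1) :
    derivative^[j] p
      = Polynomial.C ((Nat.descFactorial (n + k + 1) j : ℚ)) *
        ∑ l ∈ Finset.Icc (k + j) (n + k), G k (l - j) * Polynomial.X ^ (n + k - l) := by
  have hvanish : ∀ i < k, G k i = 0 := fun i hi => hG.eq_zero_of_lt hi
  have hp' : p = appellSum (G k) (n + k) := by
    simpa [← hp] using sum_Icc_eq_appellSum hvanish (n + k) 0
  obtain ⟨m, hm⟩ : ∃ m, n + k = m + j := ⟨n + k - j, by omega⟩
  rw [hp', hm, (hG.isAppell k).iterate_derivative_appellSum, sum_Icc_eq_appellSum hvanish,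
    C_eq_natCast]
end

section
/- Let p(x) = ∑_{l=k}^{n+k} G_l^k(x) x^{n+k−l} / (l!(n+k−l)!). Then for every j with 0 ≤ j ≤ n, the j-th derivative of p is p^{(j)}(x) = 2^j ∑_{l=k+j}^{n+k} G_{l−j}^k(x) x^{n+k−l} / ((l−j)!(n+k−l)!). -/
open Polynomial Finset

/-!
Put `a i = G_{k+i}^k(x) / (k+i)!` and `b j = x^j / j!`, so that `p = ∑_{i+j=n} a i * b j`.
Differentiation lowers both sequences, `a 0` included because `G_{k-1}^k = 0`; by the Leibniz
rule each of the two resulting sums is again `∑_{i+j=n-1} a i * b j`, so every derivative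
doubles the sum and shortens it by one.

Both facts about `G` come from differentiating the generating function in `x`
coefficientwise: `(e^t + 1)^k` does not depend on `x` and is invertible, while `e^{xt}`
differentiates to `t e^{xt}`. Invertibility also shows that `t^k` divides `∑ G_n^k t^n / n!`.
-/

open scoped Nat

section LowersUnderDerivative

variable {R : Type*} [CommSemiring R]

def LowersUnderDerivative (a : ℕ → R[X]) : Prop :=
  derivative (a 0) = 0 ∧ ∀ i, derivative (a (i + 1)) = a i

variable {a b : ℕ → R[X]}

theorem LowersUnderDerivative.derivative_sum_antidiagonal_succ (ha : LowersUnderDerivative a)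
    (hb : LowersUnderDerivative b) (m : ℕ) :
    derivative (∑ x ∈ antidiagonal (m + 1), a x.1 * b x.2)
      = 2 * ∑ x ∈ antidiagonal m, a x.1 * b x.2 := by
  simp only [derivative_sum, derivative_mul, sum_add_distrib]
  rw [Nat.sum_antidiagonal_succ, Nat.sum_antidiagonal_succ']
  simp only [ha.1, hb.1, ha.2, hb.2, zero_mul, mul_zero, zero_add, two_mul]

theorem LowersUnderDerivative.iterate_derivative_sum_antidiagonal (ha : LowersUnderDerivative a)
    (hb : LowersUnderDerivative b) (m j : ℕ) :
    derivative^[j] (∑ x ∈ antidiagonal (m + j), a x.1 * b x.2)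
      = C (2 ^ j) * ∑ x ∈ antidiagonal m, a x.1 * b x.2 := by
  induction j with
  | zero => simp
  | succ j ih =>
    rw [← add_assoc, Function.iterate_succ_apply, ha.derivative_sum_antidiagonal_succ hb,
      ← C_ofNat, iterate_derivative_C_mul, ih, ← mul_assoc, ← C_mul, pow_succ']

theorem lowersUnderDerivative_C_inv_factorial_mul_X_pow {K : Type*} [Field K] [CharZero K] :
    LowersUnderDerivative fun j => C ((j ! : K)⁻¹) * X ^ j := by
  refine ⟨by simp, fun j => ?_⟩
  rw [derivative_C_mul, derivative_X_pow, ← mul_assoc, ← C_mul, Nat.add_sub_cancel]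
  congr 2
  push_cast [Nat.factorial_succ]
  field_simp

end LowersUnderDerivative

theorem sum_Icc_eq_sum_antidiagonal {M : Type*} [AddCommMonoid M] (f : ℕ → ℕ → M)
    {n k j : ℕ} (hj : j ≤ n) :
    ∑ l ∈ Icc (k + j) (n + k), f (l - j) (n + k - l)
      = ∑ x ∈ antidiagonal (n - j), f (k + x.1) x.2 := by
  refine sum_nbij' (fun l => (l - j - k, n + k - l)) (fun x => k + j + x.1) ?_ ?_ ?_ ?_ ?_ <;>
    intro x hx <;> simp only [mem_Icc, HasAntidiagonal.mem_antidiagonal] at hx ⊢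
  · omega
  · omega
  · omega
  · ext <;> simp only <;> omega
  · congr 1; omega

section CoeffDerivative

variable {R : Type*} [CommSemiring R]

/-- `∂/∂x` of a power series in `t` whose coefficients are polynomials in `x`. -/
noncomputable def coeffDerivative (f : PowerSeries R[X]) : PowerSeries R[X] :=
  PowerSeries.mk fun m => derivative (PowerSeries.coeff m f)

@[simp]
theorem coeff_coeffDerivative (f : PowerSeries R[X]) (m : ℕ) :
    PowerSeries.coeff m (coeffDerivative f) = derivative (PowerSeries.coeff m f) :=
  PowerSeries.coeff_mk _ _

theorem coeffDerivative_mul (f g : PowerSeries R[X]) :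
    coeffDerivative (f * g) = coeffDerivative f * g + f * coeffDerivative g := by
  ext m
  simp only [coeff_coeffDerivative, PowerSeries.coeff_mul, map_add, derivative_sum, derivative_mul,
    sum_add_distrib]

theorem coeffDerivative_map_C_mul (f : PowerSeries R) (g : PowerSeries R[X]) :
    coeffDerivative (PowerSeries.map C f * g) = PowerSeries.map C f * coeffDerivative g := by
  have : coeffDerivative (PowerSeries.map C f) = 0 := by
    ext m
    simp
  rw [coeffDerivative_mul, this, zero_mul, zero_add]

end CoeffDerivative

theorem coeffDerivative_expXPS : coeffDerivative expXPS = PowerSeries.X * expXPS := by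
  ext (_ | m)
  · simp [expXPS]
  · rw [PowerSeries.coeff_succ_X_mul]
    simp only [coeff_coeffDerivative, expXPS, PowerSeries.coeff_mk, derivative_C_mul,
      derivative_X_pow, ← mul_assoc, ← C_mul, Nat.add_sub_cancel]
    congr 2
    push_cast [Nat.factorial_succ]
    field_simp

theorem expPS_eq_map_exp : expPS = PowerSeries.map C (PowerSeries.exp ℚ) := by
  ext m
  simp [expPS]

theorem isUnit_map_C_exp_add_one_pow (k : ℕ) :
    IsUnit (PowerSeries.map C ((PowerSeries.exp ℚ + 1) ^ k)) := by
  refine IsUnit.map _ (PowerSeries.isUnit_iff_constantCoeff.mpr ?_)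
  simp

namespace IsGenocchi

variable {G : ℕ → ℕ → ℚ[X]}

theorem egf_mul_map_C_eq (hG : IsGenocchi G) (k : ℕ) :
    (PowerSeries.mk fun n => C ((n ! : ℚ)⁻¹) * G k n)
        * PowerSeries.map C ((PowerSeries.exp ℚ + 1) ^ k)
      = PowerSeries.map C ((2 * PowerSeries.X) ^ k) * expXPS := by
  simp only [map_pow, map_add, map_one, map_mul, map_ofNat, PowerSeries.map_X, ← expPS_eq_map_exp]
  exact hG k

theorem coeffDerivative_egf (hG : IsGenocchi G) (k : ℕ) :
    coeffDerivative (PowerSeries.mk fun n => C ((n ! : ℚ)⁻¹) * G k n)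
      = PowerSeries.X * PowerSeries.mk fun n => C ((n ! : ℚ)⁻¹) * G k n := by
  refine (isUnit_map_C_exp_add_one_pow k).mul_right_cancel ?_
  have h := congrArg coeffDerivative (hG.egf_mul_map_C_eq k)
  rw [mul_comm, coeffDerivative_map_C_mul, coeffDerivative_map_C_mul, coeffDerivative_expXPS] at h
  rw [mul_comm, h, mul_assoc, hG.egf_mul_map_C_eq k]
  ring

theorem derivative_coeff_succ (hG : IsGenocchi G) (k n : ℕ) :
    derivative (C (((n + 1)! : ℚ)⁻¹) * G k (n + 1)) = C ((n ! : ℚ)⁻¹) * G k n := by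
  simpa using congrArg (PowerSeries.coeff (n + 1)) (hG.coeffDerivative_egf k)

theorem eq_zero_of_lt_s11 (hG : IsGenocchi G) {k n : ℕ} (hn : n < k) : G k n = 0 := by
  have hdvd : PowerSeries.X ^ k ∣ PowerSeries.mk fun n => C ((n ! : ℚ)⁻¹) * G k n := by
    rw [← (isUnit_map_C_exp_add_one_pow k).dvd_mul_right, hG.egf_mul_map_C_eq k, map_pow, map_mul,
      PowerSeries.map_X, mul_pow]
    exact (dvd_mul_left _ _).mul_right _
  simpa [Nat.factorial_ne_zero] using PowerSeries.X_pow_dvd_iff.mp hdvd n hn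

theorem lowersUnderDerivative (hG : IsGenocchi G) {k : ℕ} (hk : 1 ≤ k) :
    LowersUnderDerivative fun i => C (((k + i)! : ℚ)⁻¹) * G k (k + i) := by
  obtain ⟨k, rfl⟩ : ∃ k', k = k' + 1 := ⟨k - 1, by omega⟩
  refine ⟨?_, fun i => ?_⟩ <;> dsimp only
  · rw [add_zero, hG.derivative_coeff_succ, hG.eq_zero_of_lt_s11 k.lt_succ_self, mul_zero]
  · rw [← add_assoc, hG.derivative_coeff_succ]

end IsGenocchi

theorem genocchi_weighted_poly_iterated_deriv (G : ℕ → ℕ → Polynomial ℚ) (hG : IsGenocchi G)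
    (n k : ℕ) (hk : 1 ≤ k)
    (p : Polynomial ℚ)
    (hp : p = ∑ l ∈ Finset.Icc k (n + k),
      Polynomial.C (((l.factorial : ℚ) * ((n + k - l).factorial : ℚ))⁻¹) * G k l *
        Polynomial.X ^ (n + k - l))
    (j : ℕ) (hj : j ≤ n) :
    derivative^[j] p
      = Polynomial.C ((2 : ℚ) ^ j) *
        ∑ l ∈ Finset.Icc (k + j) (n + k),
          Polynomial.C ((((l - j).factorial : ℚ) * ((n + k - l).factorial : ℚ))⁻¹) *
            G k (l - j) * Polynomial.X ^ (n + k - l) := by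
  have hsum (i : ℕ) (hi : i ≤ n) :
      ∑ l ∈ Icc (k + i) (n + k),
        C ((((l - i)! : ℚ) * ((n + k - l)! : ℚ))⁻¹) * G k (l - i) * X ^ (n + k - l)
      = ∑ x ∈ antidiagonal (n - i),
          C (((k + x.1)! : ℚ)⁻¹) * G k (k + x.1) * (C ((x.2 ! : ℚ)⁻¹) * X ^ x.2) := by
    rw [sum_Icc_eq_sum_antidiagonal (fun u v => C (((u ! : ℚ) * (v ! : ℚ))⁻¹) * G k u * X ^ v) hi]
    refine sum_congr rfl fun x _ => ?_
    rw [mul_inv, C_mul]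
    ring
  have hp₀ := hsum 0 n.zero_le
  simp only [add_zero, Nat.sub_zero] at hp₀
  rw [hp, hp₀, hsum j hj]
  simpa only [Nat.sub_add_cancel hj] using
    (hG.lowersUnderDerivative hk).iterate_derivative_sum_antidiagonal
      lowersUnderDerivative_C_inv_factorial_mul_X_pow (n - j) j
end
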